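/- arXiv:1405.6970 — 3 statements merged into one kernel-verified Lean document; each statement's English description precedes it below -/
import Mathlib

section
/- Let (G, Γ) be a matched pair of groups. For each fixed s ∈ Γ, the map G × G → G × G, (g, h) ↦ ((s ◁ h) ▷ g, hg), is a bijection. -/
/-- Let `(G, Γ)` be a matched pair of groups.  For each fixed `s ∈ Γ`, the map
`G × G → G × G`, `(g, h) ↦ ((s ◁ h) ▷ g, h g)`, is a bijection. -/
theorem matchedPair_fusion_left_bijective
    {G Γ : Type*} [Group G] [Group Γ]
    (rhd : Γ → G → G) (lhd : Γ → G → Γ)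
    (hA1 : ∀ s, lhd s 1 = s)
    (hA2 : ∀ s g h, lhd s (g * h) = lhd (lhd s g) h)
    (hA3 : ∀ g, rhd 1 g = g)
    (hA4 : ∀ s t g, rhd (s * t) g = rhd s (rhd t g))
    (hM1 : ∀ s g h, rhd s (g * h) = rhd s g * rhd (lhd s g) h)
    (hM2 : ∀ s t g, lhd (s * t) g = lhd s (rhd t g) * lhd t g)
    (hB1 : ∀ s, Function.Bijective (rhd s))
    (hB2 : ∀ g, Function.Bijective (fun s => lhd s g))
    (s : Γ) :
    Function.Bijective (fun p : G × G => (rhd (lhd s p.2) p.1, p.2 * p.1)) := by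
  constructor
  · rintro ⟨g, h⟩ ⟨g', h'⟩ hpq
    simp only [Prod.mk.injEq] at hpq
    obtain ⟨h1, h2⟩ := hpq
    have e2 : rhd s (h * g) = rhd s (h' * g') := by rw [h2]
    rw [hM1, hM1, h1] at e2
    have hh : h = h' := (hB1 s).1 (mul_right_cancel e2)
    subst hh
    have hg : g = g' := (hB1 (lhd s h)).1 h1
    simp [hg]
  · rintro ⟨u, v⟩
    obtain ⟨h, hh⟩ := (hB1 s).2 (rhd s v * u⁻¹)
    obtain ⟨g, hg⟩ := (hB1 (lhd s h)).2 u
    refine ⟨⟨g, h⟩, ?_⟩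
    have key : rhd s (h * g) = rhd s v := by
      rw [hM1, hh, hg]; group
    simp only [Prod.mk.injEq]
    exact ⟨hg, (hB1 s).1 key⟩
end

section
/- Let (G, Γ) be a matched pair and φ, ψ : Γ → G group homomorphisms satisfying, for all s, t ∈ Γ: (t⁻¹ ◁ φ(s⁻¹)) s t = s ◁ ψ(t). Then the map b : Γ × Γ → Γ × Γ, b(s, t) = ((t⁻¹ ◁ φ(s⁻¹))⁻¹, s ◁ ψ(t)), is a bijection. -/
/-!
If `l` is a left action and `r` a right action of a group `Γ` on itself with
`x * y = l x y * r x y` (compatible in the sense of Lu–Yan–Zhu), then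
`r x⁻¹ (l x y) = (r x y)⁻¹`. Hence `(u, v) = (l s t, r s t)` can be solved uniquely:
`s⁻¹ = r v⁻¹ u⁻¹` and then `t = l s⁻¹ u`. The braiding map of the matched pair is of this
form, with the left action `(s, t) ↦ (t⁻¹ ◁ φ(s⁻¹))⁻¹` and the right action `(s, t) ↦ s ◁ ψ(t)`;
the hypothesis on `φ` and `ψ` is exactly the compatibility.
-/

section CompatibleActions

variable {Γ : Type*} [Group Γ] {l r : Γ → Γ → Γ}

theorem leftAct_inv_leftAct (l_one : ∀ y, l 1 y = y) (l_mul : ∀ x z y, l (x * z) y = l x (l z y))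
    (x y : Γ) : l x⁻¹ (l x y) = y := by
  rw [← l_mul, inv_mul_cancel, l_one]

theorem rightAct_rightAct_inv (r_one : ∀ x, r x 1 = x)
    (r_mul : ∀ x y z, r (r x y) z = r x (y * z)) (x y : Γ) : r (r x y) y⁻¹ = x := by
  rw [r_mul, mul_inv_cancel, r_one]

theorem rightAct_inv_leftAct (l_one : ∀ y, l 1 y = y) (l_mul : ∀ x z y, l (x * z) y = l x (l z y))
    (compat : ∀ x y, x * y = l x y * r x y) (x y : Γ) : r x⁻¹ (l x y) = (r x y)⁻¹ := by
  have h := compat x⁻¹ (l x y)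
  rw [leftAct_inv_leftAct l_one l_mul] at h
  calc r x⁻¹ (l x y) = y⁻¹ * (x⁻¹ * l x y) := by rw [h, inv_mul_cancel_left]
    _ = y⁻¹ * (x⁻¹ * (x * y * (r x y)⁻¹)) := by rw [compat x y, mul_inv_cancel_right]
    _ = (r x y)⁻¹ := by group

theorem bijective_of_mul_eq_leftAct_mul_rightAct
    (l_one : ∀ y, l 1 y = y) (l_mul : ∀ x z y, l (x * z) y = l x (l z y))
    (r_one : ∀ x, r x 1 = x) (r_mul : ∀ x y z, r (r x y) z = r x (y * z))
    (compat : ∀ x y, x * y = l x y * r x y) :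
    Function.Bijective (fun p : Γ × Γ => (l p.1 p.2, r p.1 p.2)) := by
  refine Function.bijective_iff_has_inverse.mpr
    ⟨fun p => ((r p.2⁻¹ p.1⁻¹)⁻¹, l (r p.2⁻¹ p.1⁻¹) p.1), ?_, ?_⟩
  · rintro ⟨s, t⟩
    have hs : r (r s t)⁻¹ (l s t)⁻¹ = s⁻¹ := by
      rw [← rightAct_inv_leftAct l_one l_mul compat, rightAct_rightAct_inv r_one r_mul]
    simp only [hs, inv_inv, leftAct_inv_leftAct l_one l_mul]
  · rintro ⟨u, v⟩
    have hv : r (r v⁻¹ u⁻¹) u = v⁻¹ := by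
      simpa using rightAct_rightAct_inv r_one r_mul v⁻¹ u⁻¹
    simp only [leftAct_inv_leftAct l_one l_mul, rightAct_inv_leftAct l_one l_mul compat, hv,
      inv_inv]

end CompatibleActions

theorem matchedPair_braiding_map_bijective_general
    {G Γ : Type*} [Group G] [Group Γ]
    (lhd : Γ → G → Γ)
    (hA1 : ∀ s, lhd s 1 = s)
    (hA2 : ∀ s g h, lhd s (g * h) = lhd (lhd s g) h)
    (φ ψ : Γ →* G)
    (hcomp : ∀ s t : Γ, lhd t⁻¹ (φ s⁻¹) * s * t = lhd s (ψ t)) :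
    Function.Bijective
      (fun p : Γ × Γ => ((lhd p.2⁻¹ (φ p.1⁻¹))⁻¹, lhd p.1 (ψ p.2))) := by
  refine bijective_of_mul_eq_leftAct_mul_rightAct
    (l := fun s t => (lhd t⁻¹ (φ s⁻¹))⁻¹) (r := fun s t => lhd s (ψ t)) ?_ ?_ ?_ ?_ ?_
  · simp [hA1]
  · simp [hA2]
  · simp [hA1]
  · simp [hA2]
  · intro s t
    rw [← hcomp, mul_assoc, inv_mul_cancel_left]

/-- Let `(G, Γ)` be a matched pair and `φ, ψ : Γ → G` group homomorphisms satisfying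
`(t⁻¹ ◁ φ(s⁻¹)) s t = s ◁ ψ(t)` for all `s, t ∈ Γ`.  Then the map
`b(s, t) = ((t⁻¹ ◁ φ(s⁻¹))⁻¹, s ◁ ψ(t))` is a bijection of `Γ × Γ`. -/
theorem matchedPair_braiding_map_bijective
    {G Γ : Type*} [Group G] [Group Γ]
    (rhd : Γ → G → G) (lhd : Γ → G → Γ)
    (hA1 : ∀ s, lhd s 1 = s)
    (hA2 : ∀ s g h, lhd s (g * h) = lhd (lhd s g) h)
    (hA3 : ∀ g, rhd 1 g = g)
    (hA4 : ∀ s t g, rhd (s * t) g = rhd s (rhd t g))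
    (hM1 : ∀ s g h, rhd s (g * h) = rhd s g * rhd (lhd s g) h)
    (hM2 : ∀ s t g, lhd (s * t) g = lhd s (rhd t g) * lhd t g)
    (hB2 : ∀ g, Function.Bijective (fun s => lhd s g))
    (φ ψ : Γ →* G)
    (hcomp : ∀ s t : Γ, lhd t⁻¹ (φ s⁻¹) * s * t = lhd s (ψ t)) :
    Function.Bijective
      (fun p : Γ × Γ => ((lhd p.2⁻¹ (φ p.1⁻¹))⁻¹, lhd p.1 (ψ p.2))) :=
  matchedPair_braiding_map_bijective_general lhd hA1 hA2 φ ψ hcomp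
end

section
/- Let (G, Γ) be a matched pair and φ, ψ : Γ → G group homomorphisms satisfying the Lu–Yan–Zhu conditions: st = (^{ψ(s)}t)(s^{φ(t)}), ψ(s)^{t} = ψ(s^{φ(t)}), ˢφ(t) = φ(^{ψ(s)}t) for all s, t ∈ Γ (where ˢg = s ▷ g, sᵍ = s ◁ g, ᵍs = (s⁻¹ ◁ g⁻¹)⁻¹, gˢ = (s⁻¹ ▷ g⁻¹)⁻¹). Then the map R⁻¹ : Γ × Γ → Γ × Γ given by R⁻¹(t, s) = (^{φ(s)}t, s^{ψ(t)}) has the property that R is a set-theoretical solution of the quantum Yang–Baxter equation: R¹²R¹³R²³ = R²³R¹³R¹² as maps Γ³ → Γ³. -/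
/-- `R` applied to the first two factors of a triple. -/
def qybeR12 {X : Type*} (R : X × X → X × X) : X × X × X → X × X × X :=
  fun p => ((R (p.1, p.2.1)).1, (R (p.1, p.2.1)).2, p.2.2)

/-- `R` applied to the first and third factors of a triple. -/
def qybeR13 {X : Type*} (R : X × X → X × X) : X × X × X → X × X × X :=
  fun p => ((R (p.1, p.2.2)).1, p.2.1, (R (p.1, p.2.2)).2)

/-- `R` applied to the last two factors of a triple. -/
def qybeR23 {X : Type*} (R : X × X → X × X) : X × X × X → X × X × X :=
  fun p => (p.1, (R (p.2.1, p.2.2)).1, (R (p.2.1, p.2.2)).2)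

/-!
Since `R⁻¹` is a bijection of `Γ × Γ`, it suffices to check the QYBE for `R⁻¹` itself,
componentwise on a triple `(x, y, z)`. Writing `R⁻¹(t, s) = (f t s, g t s)`, the first
Lu–Yan–Zhu condition says `f t s * g t s = s * t`; as `f` is a left action of `G` through `φ`
and `g` a right action through `ψ`, the outer components reduce to this identity. The middle
component uses in addition the compatibility `(st) ◁ g = (s ◁ (t ▷ g)) (t ◁ g)` together with
the second condition `t ▷ ψ(s) = ψ(f s t)`.
-/

open Function

def IsQYBESolution {X : Type*} (R : X × X → X × X) : Prop :=
  qybeR12 R ∘ qybeR13 R ∘ qybeR23 R = qybeR23 R ∘ qybeR13 R ∘ qybeR12 R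

section Inverse

variable {X : Type*} (e : X × X ≃ X × X)

theorem leftInverse_qybeR12 : LeftInverse (qybeR12 ⇑e.symm) (qybeR12 ⇑e) := by
  intro p; simp [qybeR12]

theorem leftInverse_qybeR13 : LeftInverse (qybeR13 ⇑e.symm) (qybeR13 ⇑e) := by
  intro p; simp [qybeR13]

theorem leftInverse_qybeR23 : LeftInverse (qybeR23 ⇑e.symm) (qybeR23 ⇑e) := by
  intro p; simp [qybeR23]

theorem IsQYBESolution.of_symm (h : IsQYBESolution ⇑e.symm) : IsQYBESolution ⇑e := by
  have hL : LeftInverse (qybeR23 ⇑e.symm ∘ qybeR13 ⇑e.symm ∘ qybeR12 ⇑e.symm)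
      (qybeR12 ⇑e ∘ qybeR13 ⇑e ∘ qybeR23 ⇑e) :=
    (leftInverse_qybeR12 e).comp ((leftInverse_qybeR13 e).comp (leftInverse_qybeR23 e))
  have hR : RightInverse (qybeR12 ⇑e.symm ∘ qybeR13 ⇑e.symm ∘ qybeR23 ⇑e.symm)
      (qybeR23 ⇑e ∘ qybeR13 ⇑e ∘ qybeR12 ⇑e) :=
    (leftInverse_qybeR12 e.symm).comp
      ((leftInverse_qybeR13 e.symm).comp (leftInverse_qybeR23 e.symm))
  unfold IsQYBESolution at h
  funext p
  have hBack := hR ((qybeR12 ⇑e ∘ qybeR13 ⇑e ∘ qybeR23 ⇑e) p)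
  rw [h, hL] at hBack
  exact hBack.symm

end Inverse

section LuYanZhu

variable {G Γ : Type*} [Group G] [Group Γ] {rhd : Γ → G → G} {lhd : Γ → G → Γ} {φ ψ : Γ →* G}

/-- The left action `ᵍs = (s⁻¹ ◁ g⁻¹)⁻¹` of `G` on `Γ` induced by the right action `◁`. -/
def inducedLeftAct (lhd : Γ → G → Γ) (g : G) (s : Γ) : Γ := (lhd s⁻¹ g⁻¹)⁻¹

/-- `R⁻¹(t, s) = (^{φ(s)}t, s^{ψ(t)})` of the Lu–Yan–Zhu solution. -/
def lyzInv (lhd : Γ → G → Γ) (φ ψ : Γ →* G) (p : Γ × Γ) : Γ × Γ :=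
  (inducedLeftAct lhd (φ p.2) p.1, lhd p.2 (ψ p.1))

theorem inducedLeftAct_inducedLeftAct (hA2 : ∀ s g h, lhd s (g * h) = lhd (lhd s g) h)
    (g h : G) (s : Γ) :
    inducedLeftAct lhd g (inducedLeftAct lhd h s) = inducedLeftAct lhd (g * h) s := by
  simp only [inducedLeftAct, inv_inv, mul_inv_rev, hA2]

theorem lhd_lhd_eq_lhd_map_mul (hA2 : ∀ s g h, lhd s (g * h) = lhd (lhd s g) h)
    (s a b : Γ) : lhd (lhd s (ψ a)) (ψ b) = lhd s (ψ (a * b)) := by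
  rw [map_mul, hA2]

theorem inducedLeftAct_mul_lhd (h1 : ∀ s t : Γ, s * t = (lhd t⁻¹ (ψ s)⁻¹)⁻¹ * lhd s (φ t))
    (s t : Γ) : inducedLeftAct lhd (φ t) s * lhd t (ψ s) = t * s := by
  have h := congrArg (·⁻¹) (h1 s⁻¹ t⁻¹)
  simp only [map_inv, inv_inv, mul_inv_rev] at h
  exact h.symm

theorem inducedLeftAct_eq_mul_inv (h1 : ∀ s t : Γ, s * t = (lhd t⁻¹ (ψ s)⁻¹)⁻¹ * lhd s (φ t))
    (s t : Γ) : inducedLeftAct lhd (φ t) s = t * s * (lhd t (ψ s))⁻¹ :=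
  eq_mul_inv_of_mul_eq (inducedLeftAct_mul_lhd h1 s t)

theorem rhd_map_eq_map_inducedLeftAct (h2 : ∀ s t : Γ, (rhd t⁻¹ (ψ s)⁻¹)⁻¹ = ψ (lhd s (φ t)))
    (s t : Γ) : rhd t (ψ s) = ψ (inducedLeftAct lhd (φ t) s) := by
  have h := h2 s⁻¹ t⁻¹
  simp only [map_inv, inv_inv] at h
  rw [inducedLeftAct, map_inv, ← h, inv_inv]

theorem lhd_mul_map (hM2 : ∀ s t g, lhd (s * t) g = lhd s (rhd t g) * lhd t g)
    (h2 : ∀ s t : Γ, (rhd t⁻¹ (ψ s)⁻¹)⁻¹ = ψ (lhd s (φ t))) (s t x : Γ) :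
    lhd (s * t) (ψ x) = lhd s (ψ (inducedLeftAct lhd (φ t) x)) * lhd t (ψ x) := by
  rw [hM2, rhd_map_eq_map_inducedLeftAct h2]

theorem lyzInv_qybe_fst (hA2 : ∀ s g h, lhd s (g * h) = lhd (lhd s g) h)
    (h1 : ∀ s t : Γ, s * t = (lhd t⁻¹ (ψ s)⁻¹)⁻¹ * lhd s (φ t)) (x y z : Γ) :
    inducedLeftAct lhd (φ (inducedLeftAct lhd (φ z) y))
        (inducedLeftAct lhd (φ (lhd z (ψ y))) x) =
      inducedLeftAct lhd (φ z) (inducedLeftAct lhd (φ y) x) := by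
  rw [inducedLeftAct_inducedLeftAct hA2, inducedLeftAct_inducedLeftAct hA2, ← map_mul,
    ← map_mul, inducedLeftAct_mul_lhd h1]

theorem lyzInv_qybe_thd (hA2 : ∀ s g h, lhd s (g * h) = lhd (lhd s g) h)
    (h1 : ∀ s t : Γ, s * t = (lhd t⁻¹ (ψ s)⁻¹)⁻¹ * lhd s (φ t)) (x y z : Γ) :
    lhd (lhd z (ψ y)) (ψ x) =
      lhd (lhd z (ψ (inducedLeftAct lhd (φ y) x))) (ψ (lhd y (ψ x))) := by
  rw [lhd_lhd_eq_lhd_map_mul hA2, lhd_lhd_eq_lhd_map_mul hA2, inducedLeftAct_mul_lhd h1]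

theorem lyzInv_qybe_snd (hA2 : ∀ s g h, lhd s (g * h) = lhd (lhd s g) h)
    (hM2 : ∀ s t g, lhd (s * t) g = lhd s (rhd t g) * lhd t g)
    (h1 : ∀ s t : Γ, s * t = (lhd t⁻¹ (ψ s)⁻¹)⁻¹ * lhd s (φ t))
    (h2 : ∀ s t : Γ, (rhd t⁻¹ (ψ s)⁻¹)⁻¹ = ψ (lhd s (φ t))) (x y z : Γ) :
    lhd (inducedLeftAct lhd (φ z) y) (ψ (inducedLeftAct lhd (φ (lhd z (ψ y))) x)) =
      inducedLeftAct lhd (φ (lhd z (ψ (inducedLeftAct lhd (φ y) x)))) (lhd y (ψ x)) := by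
  -- both sides equal `lhd (z * y) (ψ x) * (lhd z (ψ (y * x)))⁻¹`
  have hLHS := lhd_mul_map hM2 h2 (inducedLeftAct lhd (φ z) y) (lhd z (ψ y)) x
  rw [inducedLeftAct_mul_lhd h1, lhd_lhd_eq_lhd_map_mul hA2] at hLHS
  rw [eq_mul_inv_of_mul_eq hLHS.symm, inducedLeftAct_eq_mul_inv h1, ← lhd_mul_map hM2 h2,
    ← lyzInv_qybe_thd hA2 h1, lhd_lhd_eq_lhd_map_mul hA2]

theorem isQYBESolution_lyzInv (hA2 : ∀ s g h, lhd s (g * h) = lhd (lhd s g) h)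
    (hM2 : ∀ s t g, lhd (s * t) g = lhd s (rhd t g) * lhd t g)
    (h1 : ∀ s t : Γ, s * t = (lhd t⁻¹ (ψ s)⁻¹)⁻¹ * lhd s (φ t))
    (h2 : ∀ s t : Γ, (rhd t⁻¹ (ψ s)⁻¹)⁻¹ = ψ (lhd s (φ t))) :
    IsQYBESolution (lyzInv lhd φ ψ) := by
  funext ⟨x, y, z⟩
  simp only [qybeR12, qybeR13, qybeR23, lyzInv, comp_apply, Prod.mk.injEq]
  exact ⟨lyzInv_qybe_fst hA2 h1 x y z, lyzInv_qybe_snd hA2 hM2 h1 h2 x y z,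
    lyzInv_qybe_thd hA2 h1 x y z⟩

end LuYanZhu

theorem matchedPair_lyz_solution_qybe_general
    {G Γ : Type*} [Group G] [Group Γ]
    (rhd : Γ → G → G) (lhd : Γ → G → Γ)
    (hA2 : ∀ s g h, lhd s (g * h) = lhd (lhd s g) h)
    (hM2 : ∀ s t g, lhd (s * t) g = lhd s (rhd t g) * lhd t g)
    (φ ψ : Γ →* G)
    (h1 : ∀ s t : Γ, s * t = (lhd t⁻¹ (ψ s)⁻¹)⁻¹ * lhd s (φ t))
    (h2 : ∀ s t : Γ, (rhd t⁻¹ (ψ s)⁻¹)⁻¹ = ψ (lhd s (φ t)))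
    (R : Γ × Γ ≃ Γ × Γ)
    (hR : ∀ t s : Γ, R.symm (t, s) = ((lhd t⁻¹ (φ s)⁻¹)⁻¹, lhd s (ψ t))) :
    qybeR12 (⇑R) ∘ qybeR13 (⇑R) ∘ qybeR23 (⇑R) =
      qybeR23 (⇑R) ∘ qybeR13 (⇑R) ∘ qybeR12 (⇑R) := by
  have hSymm : ⇑R.symm = lyzInv lhd φ ψ := funext fun ⟨t, s⟩ => hR t s
  apply IsQYBESolution.of_symm
  rw [hSymm]
  exact isQYBESolution_lyzInv hA2 hM2 h1 h2

/-- Let `(G, Γ)` be a matched pair and `φ, ψ : Γ → G` group homomorphisms satisfying the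
Lu–Yan–Zhu conditions `st = (^{ψ(s)}t)(s^{φ(t)})`, `ψ(s)ᵗ = ψ(s^{φ(t)})`,
`ˢφ(t) = φ(^{ψ(s)}t)` (where `ˢg = s ▷ g`, `sᵍ = s ◁ g`, `ᵍs = (s⁻¹ ◁ g⁻¹)⁻¹`,
`gˢ = (s⁻¹ ▷ g⁻¹)⁻¹`).  Then the bijection `R` of `Γ × Γ` whose inverse is
`R⁻¹(t, s) = (^{φ(s)}t, s^{ψ(t)})` is a set-theoretical solution of the quantum
Yang–Baxter equation `R¹² R¹³ R²³ = R²³ R¹³ R¹²`. -/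
theorem matchedPair_lyz_solution_qybe
    {G Γ : Type*} [Group G] [Group Γ]
    (rhd : Γ → G → G) (lhd : Γ → G → Γ)
    (hA1 : ∀ s, lhd s 1 = s)
    (hA2 : ∀ s g h, lhd s (g * h) = lhd (lhd s g) h)
    (hA3 : ∀ g, rhd 1 g = g)
    (hA4 : ∀ s t g, rhd (s * t) g = rhd s (rhd t g))
    (hM1 : ∀ s g h, rhd s (g * h) = rhd s g * rhd (lhd s g) h)
    (hM2 : ∀ s t g, lhd (s * t) g = lhd s (rhd t g) * lhd t g)
    (φ ψ : Γ →* G)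
    (h1 : ∀ s t : Γ, s * t = (lhd t⁻¹ (ψ s)⁻¹)⁻¹ * lhd s (φ t))
    (h2 : ∀ s t : Γ, (rhd t⁻¹ (ψ s)⁻¹)⁻¹ = ψ (lhd s (φ t)))
    (h3 : ∀ s t : Γ, rhd s (φ t) = φ ((lhd t⁻¹ (ψ s)⁻¹)⁻¹))
    (R : Γ × Γ ≃ Γ × Γ)
    (hR : ∀ t s : Γ, R.symm (t, s) = ((lhd t⁻¹ (φ s)⁻¹)⁻¹, lhd s (ψ t))) :
    qybeR12 (⇑R) ∘ qybeR13 (⇑R) ∘ qybeR23 (⇑R) =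
      qybeR23 (⇑R) ∘ qybeR13 (⇑R) ∘ qybeR12 (⇑R) :=
  matchedPair_lyz_solution_qybe_general rhd lhd hA2 hM2 φ ψ h1 h2 R hR
end
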